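/- Let a, b : ℤ → ℝ be bounded with a(n) > 0 for all n, and let J be the bounded self-adjoint operator on ℓ²(ℤ) determined by J e_n = a(n) e_{n−1} + b(n) e_n + a(n+1) e_{n+1}, where (e_n) is the standard orthonormal basis, and let J₊ be the compression of J to the closed span ℓ²₊ of {e_n : n ≥ 0}. Let c be a real number not in σ(J) ∪ σ(J₊), set r₊(c) = ⟨(J₊ − c)^{-1} e₀, e₀⟩, φ(c) = arctan r₊(c), and κ_c = (J − c)^{-1}( a(0) sin φ(c) · e_{−1} + cos φ(c) · e₀ ). Then κ_c = cos φ(c) · (J₊ − c)^{-1} e₀, viewed as an element of ℓ²(ℤ) supported on {n ≥ 0}; in particular ⟨κ_c, e_n⟩ = 0 for all n ≤ −1, i.e. κ_c ∈ ℓ²₊. -/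

import Mathlib

set_option maxHeartbeats 1000000
set_option synthInstance.maxHeartbeats 1000000


open scoped InnerProductSpace

/-- The Hilbert space `ℓ²(ℤ)` (with complex scalars). -/
noncomputable abbrev Hsp : Type := lp (fun _ : ℤ => ℂ) 2

/-- The standard orthonormal basis vector `e_n` of `ℓ²(ℤ)`. -/
noncomputable def eZ (n : ℤ) : Hsp := lp.single 2 n 1

/-- The closed subspace `ℓ²₊`, the closed span of `{e_n : n ≥ 0}`. -/
noncomputable def Hplus : Submodule ℂ Hsp :=
  (Submodule.span ℂ {x : Hsp | ∃ n : ℤ, 0 ≤ n ∧ x = eZ n}).topologicalClosure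

lemma inner_eZ (n : ℤ) (f : Hsp) : ⟪eZ n, f⟫_ℂ = f n := by
  simp [eZ, lp.inner_single_left, RCLike.inner_apply]

lemma eZ_apply (n m : ℤ) : (eZ n : ∀ _ : ℤ, ℂ) m = if m = n then 1 else 0 := by
  rcases eq_or_ne m n with h | h
  · subst h; simp [eZ, lp.single_apply_self]
  · simp [eZ, lp.single_apply_ne _ _ _ h, h]

lemma hsp_add_apply (f g : Hsp) (i : ℤ) : (f + g : Hsp) i = f i + g i := rfl

lemma hsp_sub_apply (f g : Hsp) (i : ℤ) : (f - g : Hsp) i = f i - g i := rfl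

lemma hsp_smul_apply (c : ℂ) (f : Hsp) (i : ℤ) : (c • f : Hsp) i = c * f i := rfl

lemma norm_eZ (n : ℤ) : ‖eZ n‖ = 1 := by
  simp [eZ]

lemma hplus_clm_ext {f g : Hsp →L[ℂ] ℂ} (h : ∀ n : ℤ, 0 ≤ n → f (eZ n) = g (eZ n)) :
    ∀ x ∈ Hplus, f x = g x := by
  intro x hx
  have hle : Hplus ≤ LinearMap.eqLocus (f : Hsp →ₗ[ℂ] ℂ) (g : Hsp →ₗ[ℂ] ℂ) :=
    Submodule.topologicalClosure_minimal _
      (Submodule.span_le.mpr (by rintro y ⟨n, hn, rfl⟩; exact h n hn))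
      (isClosed_eq f.continuous g.continuous)
  exact hle hx

lemma hplus_coord {x : Hsp} (hx : x ∈ Hplus) {n : ℤ} (hn : n ≤ -1) : x n = 0 := by
  have := hplus_clm_ext (f := innerSL ℂ (eZ n)) (g := 0) ?_ x hx
  · rw [innerSL_apply_apply, inner_eZ] at this
    simpa using this
  · intro m hm
    rw [innerSL_apply_apply, inner_eZ, eZ_apply]
    have : ¬ (n = m) := by omega
    simp [this]

/-- Let `J` be a two-sided Jacobi operator on `ℓ²(ℤ)` and `J₊` its
compression to `ℓ²₊`. For real `c ∉ σ(J) ∪ σ(J₊)`, with `r₊(c) = ⟨(J₊−c)⁻¹e₀, e₀⟩`,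
`φ(c) = arctan r₊(c)` and `κ_c = (J−c)⁻¹(a(0) sin φ(c)·e_{−1} + cos φ(c)·e₀)`, one has
`κ_c = cos φ(c)·(J₊−c)⁻¹e₀` viewed inside `ℓ²(ℤ)`; in particular `⟨κ_c, e_n⟩ = 0`
for all `n ≤ −1`, i.e. `κ_c ∈ ℓ²₊`. -/
theorem statement15
    (a b : ℤ → ℝ) (ha : ∀ n, 0 < a n)
    (hbdd : ∃ C : ℝ, ∀ n, |a n| ≤ C ∧ |b n| ≤ C)
    (J : Hsp →L[ℂ] Hsp) (hJsa : IsSelfAdjoint J)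
    (hJ : ∀ n : ℤ, J (eZ n) =
      (a n : ℂ) • eZ (n - 1) + (b n : ℂ) • eZ n + (a (n + 1) : ℂ) • eZ (n + 1))
    (Jp : Hplus →L[ℂ] Hplus)
    (hJp : ∀ x y : Hplus, ⟪(Jp x : Hsp), (y : Hsp)⟫_ℂ = ⟪J (x : Hsp), (y : Hsp)⟫_ℂ)
    (f0 : Hplus) (hf0 : (f0 : Hsp) = eZ 0)
    (c : ℝ)
    (hcJ : (c : ℂ) ∉ spectrum ℂ J) (hcJp : (c : ℂ) ∉ spectrum ℂ Jp)
    (r φ : ℝ) (hr : (r : ℂ) = ⟪(Ring.inverse (Jp - (c : ℂ) • 1)) f0, f0⟫_ℂ)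
    (hφ : φ = Real.arctan r)
    (κ : Hsp)
    (hκ : κ = (Ring.inverse (J - (c : ℂ) • 1))
      (((a 0 * Real.sin φ : ℝ) : ℂ) • eZ (-1) + ((Real.cos φ : ℝ) : ℂ) • eZ 0)) :
    κ = ((Real.cos φ : ℝ) : ℂ) • (((Ring.inverse (Jp - (c : ℂ) • 1)) f0 : Hplus) : Hsp) ∧
      (∀ n : ℤ, n ≤ -1 → ⟪κ, eZ n⟫_ℂ = 0) ∧ κ ∈ Hplus := by
  classical
  set u : Hplus := (Ring.inverse (Jp - (c : ℂ) • 1)) f0 with hu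
  -- units
  have hUnitJp : IsUnit (Jp - (c : ℂ) • 1) := by
    have h := spectrum.notMem_iff.mp hcJp
    rw [Algebra.algebraMap_eq_smul_one] at h
    simpa only [neg_sub] using h.neg
  have hUnitJ : IsUnit (J - (c : ℂ) • 1) := by
    have h := spectrum.notMem_iff.mp hcJ
    rw [Algebra.algebraMap_eq_smul_one] at h
    simpa only [neg_sub] using h.neg
  have huJp : (Jp - (c : ℂ) • 1) u = f0 := by
    have h := congrArg (fun T : Hplus →L[ℂ] Hplus => T f0)
      (Ring.mul_inverse_cancel _ hUnitJp)
    simpa [hu, ContinuousLinearMap.mul_apply] using h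
  -- J x at coordinate ≤ -2 vanishes for x ∈ Hplus
  have hJneg : ∀ x ∈ Hplus, ∀ n : ℤ, n ≤ -2 → (J x) n = 0 := by
    intro x hx n hn
    have := hplus_clm_ext (f := (innerSL ℂ (eZ n)).comp J) (g := 0) ?_ x hx
    · rw [ContinuousLinearMap.comp_apply, innerSL_apply_apply, inner_eZ] at this
      simpa using this
    · intro m hm
      rw [ContinuousLinearMap.comp_apply, innerSL_apply_apply, inner_eZ, hJ]
      have h1 : ¬ (n = m - 1) := by omega
      have h2 : ¬ (n = m) := by omega
      have h3 : ¬ (n = m + 1) := by omega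
      simp [lp.coeFn_add, lp.coeFn_smul, eZ_apply, h1, h2, h3, -Complex.coe_smul, hsp_smul_apply, hsp_add_apply]
  -- J x at coordinate -1 equals a 0 * x 0 for x ∈ Hplus
  have hJm1 : ∀ x ∈ Hplus, (J x) (-1) = (a 0 : ℂ) * x 0 := by
    intro x hx
    have := hplus_clm_ext (f := (innerSL ℂ (eZ (-1))).comp J)
      (g := (a 0 : ℂ) • innerSL ℂ (eZ 0)) ?_ x hx
    · rw [ContinuousLinearMap.comp_apply, innerSL_apply_apply, inner_eZ] at this
      rw [this]
      simp [inner_eZ]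
    · intro m hm
      rw [ContinuousLinearMap.comp_apply, innerSL_apply_apply, inner_eZ, hJ]
      rcases eq_or_ne m 0 with rfl | hm0
      · simp [lp.coeFn_add, lp.coeFn_smul, eZ_apply, inner_eZ, -Complex.coe_smul, hsp_smul_apply, hsp_add_apply, norm_eZ]
      · have h1 : ¬ ((-1 : ℤ) = m - 1) := by omega
        have h2 : ¬ ((-1 : ℤ) = m) := by omega
        have h3 : ¬ ((-1 : ℤ) = m + 1) := by omega
        have h4 : ¬ ((0 : ℤ) = m) := by omega
        simp [lp.coeFn_add, lp.coeFn_smul, eZ_apply, inner_eZ, h1, h2, h3, h4, -Complex.coe_smul, hsp_smul_apply, hsp_add_apply]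
  -- coordinates of Jp agree with J on nonneg coordinates
  have heZmem : ∀ n : ℤ, 0 ≤ n → eZ n ∈ Hplus := fun n hn =>
    Submodule.le_topologicalClosure _ (Submodule.subset_span ⟨n, hn, rfl⟩)
  have hcoordJp : ∀ n : ℤ, 0 ≤ n → ((Jp u : Hplus) : Hsp) n = (J (u : Hsp)) n := by
    intro n hn
    have h := hJp u ⟨eZ n, heZmem n hn⟩
    have h' := congrArg (starRingEnd ℂ) h
    rw [inner_conj_symm, inner_conj_symm] at h'
    simpa [inner_eZ] using h'
  -- u 0 = r
  have hu0 : ((u : Hsp) : ∀ _ : ℤ, ℂ) 0 = (r : ℂ) := by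
    have h := congrArg (starRingEnd ℂ) hr
    rw [Submodule.coe_inner, inner_conj_symm, hf0, inner_eZ] at h
    rw [← h]
    simp [Complex.conj_ofReal]
  -- Key identity: (J - c) u = eZ 0 + (a 0 * r) • eZ (-1)
  have hA : (J - (c : ℂ) • 1) (u : Hsp) = eZ 0 + ((a 0 : ℂ) * (r : ℂ)) • eZ (-1) := by
    apply lp.ext
    funext n
    have hL : ((J - (c : ℂ) • 1) (u : Hsp) : ∀ _ : ℤ, ℂ) n
        = (J (u : Hsp)) n - (c : ℂ) * ((u : Hsp) : ∀ _ : ℤ, ℂ) n := by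
      simp [ContinuousLinearMap.sub_apply, ContinuousLinearMap.smul_apply,
        lp.coeFn_sub, lp.coeFn_smul, Pi.sub_apply, Pi.smul_apply, smul_eq_mul,
        -Complex.coe_smul, hsp_smul_apply, hsp_sub_apply]
    rw [lp.coeFn_add, Pi.add_apply, lp.coeFn_smul, Pi.smul_apply, smul_eq_mul, hL]
    rcases le_or_gt n (-1) with hn | hn
    · rcases eq_or_lt_of_le hn with hn1 | hn2
      · -- n = -1
        subst hn1
        rw [hJm1 _ u.2, hu0, hplus_coord u.2 (le_refl (-1 : ℤ))]
        have h0 : ¬ ((-1 : ℤ) = 0) := by omega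
        simp [eZ_apply, h0]
      · -- n ≤ -2
        have hn' : n ≤ -2 := by omega
        rw [hJneg _ u.2 n hn', hplus_coord u.2 hn]
        have h0 : ¬ (n = 0) := by omega
        have h1 : ¬ (n = -1) := by omega
        simp [eZ_apply, h0, h1]
    · -- n ≥ 0
      have hn' : (0 : ℤ) ≤ n := by omega
      rw [← hcoordJp n hn']
      have hsub : (((Jp - (c : ℂ) • 1) u : Hplus) : Hsp)
          = ((Jp u : Hplus) : Hsp) - (c : ℂ) • (u : Hsp) := by
        simp [ContinuousLinearMap.sub_apply, ContinuousLinearMap.smul_apply, -Complex.coe_smul]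
      have hval := congrArg (fun z : Hsp => (z : ∀ _ : ℤ, ℂ) n) (huJp ▸ hsub)
      simp only [lp.coeFn_sub, Pi.sub_apply, lp.coeFn_smul, Pi.smul_apply,
        smul_eq_mul] at hval
      rw [← hval, hf0]
      have h1 : ¬ (n = -1) := by omega
      simp [eZ_apply, h1]
  -- trigonometric identity
  have htrig : Real.sin φ = r * Real.cos φ := by
    rw [hφ, Real.sin_arctan, Real.cos_arctan]; ring
  -- rewrite the vector inside the resolvent
  have hB : ((a 0 * Real.sin φ : ℝ) : ℂ) • eZ (-1) + ((Real.cos φ : ℝ) : ℂ) • eZ 0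
      = ((Real.cos φ : ℝ) : ℂ) • ((J - (c : ℂ) • 1) (u : Hsp)) := by
    rw [hA, smul_add, smul_smul]
    have hs : ((a 0 * Real.sin φ : ℝ) : ℂ)
        = ((Real.cos φ : ℝ) : ℂ) * ((a 0 : ℂ) * (r : ℂ)) := by
      rw [htrig]
      push_cast
      ring
    rw [← hs, add_comm]
  have hmain : κ = ((Real.cos φ : ℝ) : ℂ) • (u : Hsp) := by
    rw [hκ, hB, map_smul]
    congr 1
    have h := congrArg (fun T : Hsp →L[ℂ] Hsp => T (u : Hsp))
      (Ring.inverse_mul_cancel _ hUnitJ)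
    simpa [ContinuousLinearMap.mul_apply] using h
  refine ⟨hmain, ?_, ?_⟩
  · intro n hn
    rw [hmain, eZ, lp.inner_single_right]
    have h0 : ((u : Hsp) : ∀ _ : ℤ, ℂ) n = 0 := hplus_coord u.2 hn
    rw [RCLike.inner_apply]
    simp [lp.coeFn_smul, Pi.smul_apply, h0]
  · rw [hmain]
    exact Hplus.smul_mem _ u.2
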